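/- arXiv:2104.11758 — 2 statements merged into one kernel-verified Lean document; each statement's English description precedes it below -/
import Mathlib

section
/- Let T be an observation table, (≡,f) a merging map on T, and M the transducer resulting from (≡,f). Then for every u∈P_T: if f(u) is undefined then u has no run in M starting from the initial state q_ε, and if f(u) is defined then q_ε→*^{u|f(u)}q_u in M (the run of u from q_ε reaches the state q_u and produces output f(u)). -/
attribute [local instance] Classical.propDecidable

/-- A subsequential string transducer with input alphabet `σ` and output alphabet `γ`. -/
structure Transducer (σ : Type) (γ : Type) : Type 1 where
  Q : Type
  fin : Finite Q
  q0 : Q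
  w0 : List γ
  δ : Q → σ → Option (Q × List γ)
  δF : Q → Option (List γ)

namespace Transducer

variable {σ γ : Type}

/-- The run relation `q →*^{u|w} q'`, as a function: from state `q`, reading `u`,
we reach the returned state producing the returned (concatenated) output. -/
def runFrom (M : Transducer σ γ) : M.Q → List σ → Option (M.Q × List γ)
  | q, [] => some (q, [])
  | q, a :: u =>
    (M.δ q a).bind fun x =>
      (M.runFrom x.1 u).map fun y => (y.1, x.2 ++ y.2)

/-- The semantics `⟦M⟧` of a transducer, as a partial function `Σ* → Γ*`. -/
def sem (M : Transducer σ γ) (u : List σ) : Option (List γ) :=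
  (M.runFrom M.q0 u).bind fun x => (M.δF x.1).map fun w' => M.w0 ++ x.2 ++ w'

/-- The number of states `|M|` of a transducer. -/
noncomputable def size (M : Transducer σ γ) : ℕ := Nat.card M.Q

/-- The run of `v` in `M` (from the initial state) uses the transition out of
state `q` reading letter `a`. -/
def usesTransition (M : Transducer σ γ) (q : M.Q) (a : σ) (v : List σ) : Prop :=
  ∃ (vp vs : List σ) (w : List γ), v = vp ++ a :: vs ∧ M.runFrom M.q0 vp = some (q, w)

/-- Modify the transition function of `M` at `(q, a)`: replace it by `o`
(`o = none` deletes the transition, `o = some (q', w)` makes it `q →^{a|w} q'`). -/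
noncomputable def modifyDelta (M : Transducer σ γ) (q : M.Q) (a : σ)
    (o : Option (M.Q × List γ)) : Transducer σ γ :=
  { M with δ := fun p b => if p = q ∧ b = a then o else M.δ p b }

/-- The product transducer `M × A` of a transducer and a DFA. -/
noncomputable def prodDFA {Q : Type} [Finite Q] (M : Transducer σ γ) (A : DFA σ Q) :
    Transducer σ γ where
  Q := M.Q × Q
  fin := by have := M.fin; infer_instance
  q0 := (M.q0, A.start)
  w0 := M.w0
  δ := fun qp a => (M.δ qp.1 a).map fun x => ((x.1, A.step qp.2 a), x.2)
  δF := fun qp => if qp.2 ∈ A.accept then M.δF qp.1 else none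

end Transducer

/-- A table entry: a word of `Γ*`, the wildcard `#`, or `⊥`. -/
inductive TVal (γ : Type) : Type where
  | word : List γ → TVal γ
  | hash : TVal γ
  | bot  : TVal γ

/-- An observation table for a target partial function `τ` with regular domain
upper bound `Up`, based on a finite prefix-closed set `P` and a finite
suffix-closed set `S` (both containing `ε`). -/
structure ObsTable (σ γ : Type) where
  P : Finset (List σ)
  S : Finset (List σ)
  eps_mem_P : ([] : List σ) ∈ P
  eps_mem_S : ([] : List σ) ∈ S
  prefixClosed : ∀ u ∈ P, ∀ v : List σ, v <+: u → v ∈ P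
  suffixClosed : ∀ u ∈ S, ∀ v : List σ, v <:+ u → v ∈ S
  Up : Language σ
  regular : ∃ (n : ℕ) (A : DFA σ (Fin n)), A.accepts = Up
  τ : List σ → Option (List γ)
  dom_subset : ∀ u : List σ, (τ u).isSome → u ∈ Up

namespace ObsTable

variable {σ γ : Type}

/-- The set `P ∪ PΣ`. -/
def rowIdx (T : ObsTable σ γ) : Set (List σ) :=
  ↑T.P ∪ {x | ∃ p ∈ T.P, ∃ a : σ, x = p ++ [a]}

/-- The set `(P ∪ PΣ)·S` on which the table is defined. -/
def rows (T : ObsTable σ γ) : Set (List σ) :=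
  {x | ∃ u ∈ T.rowIdx, ∃ v ∈ T.S, x = u ++ v}

/-- The table entry at `x`: `#` if `x ∉ Up`, `⊥` if `x ∈ Up ∖ dom τ`, and `τ x` otherwise. -/
noncomputable def val (T : ObsTable σ γ) (x : List σ) : TVal γ :=
  if x ∈ T.Up then
    match T.τ x with
    | some w => TVal.word w
    | none => TVal.bot
  else TVal.hash

/-- `P_T`: the set of prefixes of elements of `(P ∪ PΣ)·S`. -/
def PT (T : ObsTable σ γ) : Set (List σ) := {u | ∃ x ∈ T.rows, u <+: x}

/-- `P_Γ`: those `u ∈ P_T` having an extension whose table entry is a word of `Γ*`. -/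
def PGamma (T : ObsTable σ γ) : Set (List σ) :=
  {u | u ∈ T.PT ∧ ∃ v : List σ, u ++ v ∈ T.rows ∧ ∃ w, T.val (u ++ v) = TVal.word w}

/-- A transducer `M` is compatible with the table `T`. -/
def Compatible (T : ObsTable σ γ) (M : Transducer σ γ) : Prop :=
  ∀ x ∈ T.rows,
    (∀ w, T.val x = TVal.word w → M.sem x = some w) ∧
    (T.val x = TVal.bot → M.sem x = none)

lemma rowIdx_finite [Finite σ] (T : ObsTable σ γ) : T.rowIdx.Finite := by
  refine Set.Finite.union T.P.finite_toSet ?_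
  have h : {x : List σ | ∃ p ∈ T.P, ∃ a : σ, x = p ++ [a]}
      ⊆ (fun pa : List σ × σ => pa.1 ++ [pa.2]) '' ((↑T.P : Set (List σ)) ×ˢ (Set.univ : Set σ)) := by
    rintro x ⟨p, hp, a, rfl⟩
    exact ⟨(p, a), ⟨hp, trivial⟩, rfl⟩
  exact ((T.P.finite_toSet.prod Set.finite_univ).image _).subset h

lemma rows_finite [Finite σ] (T : ObsTable σ γ) : T.rows.Finite := by
  have h : T.rows ⊆ (fun uv : List σ × List σ => uv.1 ++ uv.2) '' (T.rowIdx ×ˢ (↑T.S : Set (List σ))) := by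
    rintro x ⟨u, hu, v, hv, rfl⟩
    exact ⟨(u, v), ⟨hu, hv⟩, rfl⟩
  exact (((rowIdx_finite T).prod T.S.finite_toSet).image _).subset h

lemma PT_finite [Finite σ] (T : ObsTable σ γ) : T.PT.Finite := by
  have h : T.PT ⊆ ⋃ x ∈ T.rows, {u : List σ | u ∈ x.inits} := by
    rintro u ⟨x, hx, hpre⟩
    exact Set.mem_biUnion hx (by simpa [List.mem_inits] using hpre)
  refine (Set.Finite.biUnion (rows_finite T) fun x _ => ?_).subset h
  exact x.inits.finite_toSet

end ObsTable

/-- A merging map `(≡, f)` on an observation table `T`. -/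
structure MergingMap {σ γ : Type} (T : ObsTable σ γ) where
  rel : List σ → List σ → Prop
  f : List σ → Option (List γ)
  rel_mem : ∀ u v : List σ, rel u v → u ∈ T.PT ∧ v ∈ T.PT
  rel_refl : ∀ u ∈ T.PT, rel u u
  rel_symm : ∀ {u v : List σ}, rel u v → rel v u
  rel_trans : ∀ {u v w : List σ}, rel u v → rel v w → rel u w
  f_mem : ∀ u : List σ, (f u).isSome → u ∈ T.PT
  cond1 : ∀ u v : List σ, f u = none → rel u v → f v = none
  cond2 : ∀ (u v : List σ) (w : List γ), u ∈ T.PT → u ++ v ∈ T.rows →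
    T.val (u ++ v) = TVal.word w → ∃ x, f u = some x ∧ x <+: w
  cond3 : ∀ (u : List σ) (a : σ) (w : List γ), f (u ++ [a]) = some w →
    ∃ x, f u = some x ∧ x <+: w
  cond4 : ∀ (u u' : List σ) (a : σ) (wu : List γ), f u = some wu → rel u u' →
    u ++ [a] ∈ T.PT → u' ++ [a] ∈ T.PT →
    rel (u ++ [a]) (u' ++ [a]) ∧
    ∀ wua, f (u ++ [a]) = some wua →
      ∃ (wu' x : List γ), f u' = some wu' ∧ wua = wu ++ x ∧ f (u' ++ [a]) = some (wu' ++ x)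
  cond5 : ∀ (u u' : List σ) (w : List γ), u ∈ T.rows → T.val u = TVal.word w → rel u u' →
    (u' ∈ T.rows → T.val u' ≠ TVal.bot) ∧
    ∀ w', u' ∈ T.rows → T.val u' = TVal.word w' →
      ∃ (x fu fu' : List γ), f u = some fu ∧ f u' = some fu' ∧ w = fu ++ x ∧ w' = fu' ++ x
  cond6 : ∀ (u : List σ) (a : σ), (f (u ++ [a])).isSome →
    (¬ ∃ v, rel u v ∧ v ++ [a] ∈ T.PGamma) → f (u ++ [a]) = f u

namespace MergingMap

variable {σ γ : Type} {T : ObsTable σ γ}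

/-- The `≡`-class of `u`. -/
def cls (m : MergingMap T) (u : List σ) : Set (List σ) := {v | m.rel u v}

/-- The set of `≡`-classes meeting `dom f`. -/
def classes (m : MergingMap T) : Set (Set (List σ)) :=
  {C | ∃ u : List σ, (m.f u).isSome ∧ C = m.cls u}

/-- The size of a merging map: the number of `≡`-classes meeting `dom f`. -/
noncomputable def size (m : MergingMap T) : ℕ := m.classes.ncard

lemma cls_mem_classes (m : MergingMap T) {u : List σ} (h : (m.f u).isSome) :
    m.cls u ∈ m.classes := ⟨u, h, rfl⟩

lemma classes_finite [Finite σ] (m : MergingMap T) : m.classes.Finite := by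
  have h : m.classes ⊆ m.cls '' T.PT := by
    rintro C ⟨u, hu, rfl⟩
    exact ⟨u, m.f_mem u hu, rfl⟩
  exact ((T.PT_finite).image _).subset h

/-- A muted pair `(u, a)` of a merging map. -/
def Muted (m : MergingMap T) (u : List σ) (a : σ) : Prop :=
  (m.f u).isSome ∧ (m.f (u ++ [a])).isSome ∧
    ¬ ∃ v, m.rel u v ∧ v ++ [a] ∈ T.PGamma

/-- An open end `(u, a)` of a merging map. -/
def OpenEnd (m : MergingMap T) (u : List σ) (a : σ) : Prop :=
  u ∈ T.PT ∧ ¬ ∃ v, m.rel u v ∧ v ++ [a] ∈ T.PT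

/-- The transducer resulting from a merging map (assuming `f ε` is defined,
so that the initial state exists). -/
noncomputable def resulting [Finite σ] (m : MergingMap T) (h0 : (m.f []).isSome) :
    Transducer σ γ where
  Q := {C : Set (List σ) // C ∈ m.classes}
  fin := m.classes_finite.to_subtype
  q0 := ⟨m.cls [], m.cls_mem_classes h0⟩
  w0 := (m.f []).get h0
  δ := fun q a =>
    if h : ∃ u : List σ, (m.f u).isSome ∧ (m.f (u ++ [a])).isSome ∧ q.1 = m.cls u then
      some (⟨m.cls (h.choose ++ [a]), m.cls_mem_classes h.choose_spec.2.1⟩,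
        ((m.f (h.choose ++ [a])).get h.choose_spec.2.1).drop
          ((m.f h.choose).get h.choose_spec.1).length)
    else none
  δF := fun q =>
    if h : ∃ u : List σ, (m.f u).isSome ∧ q.1 = m.cls u ∧ u ∈ T.rows ∧
        ∃ w, T.val u = TVal.word w then
      some (h.choose_spec.2.2.2.choose.drop ((m.f h.choose).get h.choose_spec.1).length)
    else none

/-- The state `q_u` of the resulting transducer associated with `u ∈ dom f`. -/
noncomputable def state [Finite σ] (m : MergingMap T) (h0 : (m.f []).isSome)
    {u : List σ} (h : (m.f u).isSome) : (m.resulting h0).Q :=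
  ⟨m.cls u, m.cls_mem_classes h⟩

/-- An open completion of a merging map, determined by a choice `g` of added
transitions (which, when used, must only be added at open ends, with output `ε`). -/
noncomputable def openCompletion [Finite σ] (m : MergingMap T) (h0 : (m.f []).isSome)
    (g : (m.resulting h0).Q → σ → Option ((m.resulting h0).Q)) : Transducer σ γ :=
  { m.resulting h0 with
    δ := fun q a =>
      match (m.resulting h0).δ q a with
      | some x => some x
      | none => (g q a).map fun q' => (q', ([] : List γ)) }

/-- The choice `g` of added transitions only adds transitions at open ends. -/
def ValidOpenChoice [Finite σ] (m : MergingMap T) (h0 : (m.f []).isSome)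
    (g : (m.resulting h0).Q → σ → Option ((m.resulting h0).Q)) : Prop :=
  ∀ (q : (m.resulting h0).Q) (a : σ), (g q a).isSome →
    ∃ u : List σ, q.1 = m.cls u ∧ m.OpenEnd u a

/-- The run of `x` in the open completion uses a muted or an open transition. -/
def usesMutedOrOpen [Finite σ] (m : MergingMap T) (h0 : (m.f []).isSome)
    (g : (m.resulting h0).Q → σ → Option ((m.resulting h0).Q)) (x : List σ) : Prop :=
  ∃ (vp : List σ) (a : σ) (vs : List σ) (q : (m.resulting h0).Q) (w : List γ),
    x = vp ++ a :: vs ∧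
    (m.openCompletion h0 g).runFrom (m.openCompletion h0 g).q0 vp = some (q, w) ∧
    ((∃ u, q.1 = m.cls u ∧ m.Muted u a) ∨ (m.resulting h0).δ q a = none)

end MergingMap

/-- The equivalence on `P_T` induced by a transducer: two words are related when
they reach the same state of `M` (or both fail to have a run). -/
def inducedRel {σ γ : Type} (M : Transducer σ γ) (T : ObsTable σ γ) (u v : List σ) : Prop :=
  u ∈ T.PT ∧ v ∈ T.PT ∧
    (M.runFrom M.q0 u).map Prod.fst = (M.runFrom M.q0 v).map Prod.fst

/-- Helper for the induced partial output function: walk through the word,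
appending the transition output only when the step leads into `P_Γ` for
some equivalent word. -/
noncomputable def goF {σ γ : Type} (M : Transducer σ γ) (T : ObsTable σ γ) :
    M.Q → List γ → List σ → Option (List γ)
  | _, acc, [] => some acc
  | q, acc, a :: rest =>
    (M.δ q a).bind fun x =>
      goF M T x.1
        (if ∃ v ∈ T.PT, (M.runFrom M.q0 v).map Prod.fst = some q ∧ v ++ [a] ∈ T.PGamma
          then acc ++ x.2 else acc) rest

/-- The partial output function induced by a transducer on `P_T`. -/
noncomputable def inducedF {σ γ : Type} (M : Transducer σ γ) (T : ObsTable σ γ)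
    (u : List σ) : Option (List γ) :=
  if u ∈ T.PT then goF M T M.q0 M.w0 u else none

/-!
Induction on `u` from the right. The transition of the resulting transducer out of the class of
`u` on `a` is computed from an arbitrary representative `u'` of that class; condition (4) of a
merging map shows that this representative leads to the class of `ua` with output
`f(u)⁻¹ f(ua)`, so the outputs telescope to `f(u)`, and that the transition is absent when
`f(ua)` is undefined.
-/

namespace Transducer

variable {σ γ : Type}

theorem runFrom_append (M : Transducer σ γ) (q : M.Q) (u v : List σ) :
    M.runFrom q (u ++ v) = (M.runFrom q u).bind fun x =>
      (M.runFrom x.1 v).map fun y => (y.1, x.2 ++ y.2) := by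
  induction u generalizing q with
  | nil => cases M.runFrom q v <;> simp [runFrom]
  | cons a u ih =>
    simp only [List.cons_append, runFrom, ih]
    cases M.δ q a <;> simp [Option.map_bind, Option.bind_map, Function.comp_def]

theorem runFrom_concat (M : Transducer σ γ) (q : M.Q) (u : List σ) (a : σ) :
    M.runFrom q (u ++ [a]) = (M.runFrom q u).bind fun x =>
      (M.δ x.1 a).map fun y => (y.1, x.2 ++ y.2) := by
  simp [runFrom_append, runFrom]

end Transducer

theorem ObsTable.mem_PT_of_prefix {σ γ : Type} (T : ObsTable σ γ) {u v : List σ}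
    (h : v <+: u) (hu : u ∈ T.PT) : v ∈ T.PT :=
  let ⟨x, hx, hux⟩ := hu
  ⟨x, hx, h.trans hux⟩

namespace MergingMap

variable {σ γ : Type} {T : ObsTable σ γ} (m : MergingMap T)

theorem cls_eq_of_rel {u v : List σ} (h : m.rel u v) : m.cls u = m.cls v :=
  Set.ext fun _ => ⟨m.rel_trans (m.rel_symm h), m.rel_trans h⟩

theorem rel_of_cls_eq {u v : List σ} (hv : v ∈ T.PT) (h : m.cls u = m.cls v) :
    m.rel u v :=
  (h ▸ m.rel_refl v hv : v ∈ m.cls u)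

theorem isSome_f_concat_of_rel {u u' : List σ} {a : σ} (h : m.rel u u')
    (hfu : (m.f u).isSome) (hua : u ++ [a] ∈ T.PT) (hua' : u' ++ [a] ∈ T.PT)
    (hfua : (m.f (u ++ [a])).isSome) : (m.f (u' ++ [a])).isSome := by
  obtain ⟨wu, hwu⟩ := Option.isSome_iff_exists.mp hfu
  obtain ⟨wua, hwua⟩ := Option.isSome_iff_exists.mp hfua
  obtain ⟨_, _, _, _, hwu'a⟩ := (m.cond4 u u' a wu hwu h hua hua').2 wua hwua
  exact Option.isSome_of_eq_some hwu'a

variable [Finite σ] (h0 : (m.f []).isSome)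

theorem resulting_delta_eq_none (q : (m.resulting h0).Q) {u : List σ} {a : σ}
    (hq : q.1 = m.cls u) (hua : u ++ [a] ∈ T.PT) (hfua : m.f (u ++ [a]) = none) :
    (m.resulting h0).δ q a = none := by
  refine dif_neg ?_
  rintro ⟨u', hfu', hfu'a, hq'⟩
  have hrel : m.rel u' u := m.rel_of_cls_eq (T.mem_PT_of_prefix (List.prefix_append u [a]) hua)
    (hq' ▸ hq)
  simpa [hfua] using m.isSome_f_concat_of_rel hrel hfu' (m.f_mem _ hfu'a) hua hfu'a

theorem resulting_delta_eq_some (q : (m.resulting h0).Q) {u : List σ} {a : σ}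
    (hq : q.1 = m.cls u) {wu wua : List γ} (hfu : m.f u = some wu) (hua : u ++ [a] ∈ T.PT)
    (hfua : m.f (u ++ [a]) = some wua) :
    ∃ (q' : (m.resulting h0).Q) (x : List γ),
      (m.resulting h0).δ q a = some (q', x) ∧ q'.1 = m.cls (u ++ [a]) ∧ wu ++ x = wua := by
  have hex : ∃ u' : List σ, (m.f u').isSome ∧ (m.f (u' ++ [a])).isSome ∧ q.1 = m.cls u' :=
    ⟨u, Option.isSome_of_eq_some hfu, Option.isSome_of_eq_some hfua, hq⟩
  obtain ⟨hfc, hfca, hqc⟩ := hex.choose_spec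
  have hrel : m.rel u hex.choose := m.rel_of_cls_eq (m.f_mem _ hfc) (hq ▸ hqc)
  obtain ⟨hrel_a, hout⟩ := m.cond4 u hex.choose a wu hfu hrel hua (m.f_mem _ hfca)
  obtain ⟨wc, x, hwc, hwua, hwca⟩ := hout wua hfua
  refine ⟨⟨m.cls (hex.choose ++ [a]), m.cls_mem_classes hfca⟩, x,
    (show (m.resulting h0).δ q a = _ from dif_pos hex).trans ?_,
    (m.cls_eq_of_rel hrel_a).symm, hwua.symm⟩
  simp only [hwc, hwca, Option.get_some, List.drop_left]
  rfl

end MergingMap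

theorem resulting_run_general {σ γ : Type} [Finite σ]
    (T : ObsTable σ γ) (m : MergingMap T) (h0 : (m.f []).isSome)
    (u : List σ) (hu : u ∈ T.PT) :
    (m.f u = none →
      (m.resulting h0).runFrom (m.resulting h0).q0 u = none) ∧
    (∀ w : List γ, m.f u = some w →
      ∃ (q : (m.resulting h0).Q) (w' : List γ),
        (m.resulting h0).runFrom (m.resulting h0).q0 u = some (q, w') ∧
        q.1 = m.cls u ∧ (m.resulting h0).w0 ++ w' = w) := by
  induction u using List.reverseRecOn with
  | nil =>
    refine ⟨fun h => by simp [h] at h0, fun w hw => ⟨_, [], rfl, rfl, ?_⟩⟩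
    simp [MergingMap.resulting, hw]
  | append_singleton u a ih =>
    obtain ⟨ih_none, ih_some⟩ := ih (T.mem_PT_of_prefix (List.prefix_append u [a]) hu)
    rw [Transducer.runFrom_concat]
    refine ⟨fun hfua => ?_, fun w hfua => ?_⟩
    · cases hfu : m.f u with
      | none => simp [ih_none hfu]
      | some wu =>
        obtain ⟨q, w', hrun, hq, -⟩ := ih_some wu hfu
        simp [hrun, m.resulting_delta_eq_none h0 q hq hu hfua]
    · obtain ⟨wu, hfu, -⟩ := m.cond3 u a w hfua
      obtain ⟨q, w', hrun, hq, hw'⟩ := ih_some wu hfu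
      obtain ⟨q', x, hδ, hq', hx⟩ := m.resulting_delta_eq_some h0 q hq hfu hu hfua
      refine ⟨q', w' ++ x, by simp [hrun, hδ], hq', ?_⟩
      rw [← List.append_assoc, hw', hx]

/-- In the transducer resulting from a merging map, for `u ∈ P_T`:
if `f u` is undefined then `u` has no run from the initial state, and if
`f u = w` then the run of `u` reaches the state `q_u` producing total output
`w` (initial production included). -/
theorem resulting_run {σ γ : Type} [Finite σ] [Finite γ]
    (T : ObsTable σ γ) (m : MergingMap T) (h0 : (m.f []).isSome)
    (u : List σ) (hu : u ∈ T.PT) :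
    (m.f u = none →
      (m.resulting h0).runFrom (m.resulting h0).q0 u = none) ∧
    (∀ w : List γ, m.f u = some w →
      ∃ (q : (m.resulting h0).Q) (w' : List γ),
        (m.resulting h0).runFrom (m.resulting h0).q0 u = some (q, w') ∧
        q.1 = m.cls u ∧ (m.resulting h0).w0 ++ w' = w) :=
  resulting_run_general T m h0 u hu
end

section
/- Let T be an observation table, (≡,f) a merging map on T, M its resulting transducer, and (u,a) an open end of (≡,f). Then M has no transition out of the state q_u reading a, and for every u'∈dom(f) and every w∈Γ*, adding the transition q_u→^{a|w}q_{u'} to M yields a transducer M' that is compatible with T. -/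
attribute [local instance] Classical.propDecidable

/-!
In the transducer resulting from `(≡, f)`, a word `p ∈ dom f` is read from the initial state
into `q_p` with output `f(ε)⁻¹ f(p)`, and conversely every word of `P_T` that has a run lies in
`dom f`, since condition (4) transfers the definedness of `f(v a)` along `v ≡ p`. With
conditions (2) and (5) this makes the resulting transducer compatible with `T`. At an open end
`(u, a)` no `v ≡ u` has `v a ∈ P_T`, so no run on a word of `P_T` reaches `q_u` and then reads
`a`: the added transition is never used on the rows of `T`, whose images are therefore
unchanged.
-/

namespace Transducer

variable {σ γ : Type}

theorem runFrom_modifyDelta (M : Transducer σ γ) (q : M.Q) (a : σ) (o : Option (M.Q × List γ))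
    (x : List σ) (p : M.Q)
    (hx : ∀ vp vs w, x = vp ++ a :: vs → M.runFrom p vp ≠ some (q, w)) :
    (M.modifyDelta q a o).runFrom p x = M.runFrom p x := by
  induction x generalizing p with
  | nil => rfl
  | cons b x ih =>
    have hδ : (M.modifyDelta q a o).δ p b = M.δ p b := by
      refine if_neg ?_
      rintro ⟨rfl, rfl⟩
      exact hx [] x [] rfl rfl
    simp only [runFrom, hδ]
    cases hpb : M.δ p b with
    | none => rfl
    | some y =>
      refine congrArg (Option.map fun z => (z.1, y.2 ++ z.2)) (ih y.1 fun vp vs w hxv hrun => ?_)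
      refine hx (b :: vp) vs (y.2 ++ w) (by rw [hxv, List.cons_append]) ?_
      simp [runFrom, hpb, hrun]

theorem sem_modifyDelta_of_not_usesTransition {M : Transducer σ γ} {q : M.Q} {a : σ}
    {x : List σ} (o : Option (M.Q × List γ)) (hx : ¬ M.usesTransition q a x) :
    (M.modifyDelta q a o).sem x = M.sem x := by
  have hrun := M.runFrom_modifyDelta q a o x M.q0 fun vp vs w hxv hrun =>
    hx ⟨vp, vs, w, hxv, hrun⟩
  unfold sem
  rw [show (M.modifyDelta q a o).q0 = M.q0 from rfl, hrun]
  rfl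

end Transducer

namespace ObsTable

variable {σ γ : Type} {T : ObsTable σ γ}

theorem mem_PT_of_prefix_s7 {u v : List σ} (hv : v <+: u) (hu : u ∈ T.PT) : v ∈ T.PT :=
  let ⟨x, hx, hux⟩ := hu
  ⟨x, hx, hv.trans hux⟩

theorem mem_PT_of_mem_rows {x : List σ} (hx : x ∈ T.rows) : x ∈ T.PT :=
  ⟨x, hx, List.prefix_refl x⟩

end ObsTable

namespace MergingMap

variable {σ γ : Type} {T : ObsTable σ γ} (m : MergingMap T)

theorem rel_iff_cls_eq {u v : List σ} (hv : v ∈ T.PT) : m.rel u v ↔ m.cls u = m.cls v := by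
  refine ⟨fun h => Set.ext fun _ => ⟨m.rel_trans (m.rel_symm h), m.rel_trans h⟩,
    fun h => ?_⟩
  change v ∈ m.cls u
  exact h ▸ m.rel_refl v hv

theorem exists_get_prefix_of_isSome_append {p : List σ} {a : σ} (h : (m.f (p ++ [a])).isSome) :
    ∃ hp : (m.f p).isSome, (m.f p).get hp <+: (m.f (p ++ [a])).get h := by
  obtain ⟨w, hw⟩ := Option.isSome_iff_exists.mp h
  obtain ⟨x, hx, hxw⟩ := m.cond3 p a w hw
  exact ⟨by simp [hx], by simpa only [hx, hw, Option.get_some] using hxw⟩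

theorem isSome_append_of_rel {p v : List σ} {a : σ} (hrel : m.rel p v)
    (hva : (m.f (v ++ [a])).isSome) (hpa : p ++ [a] ∈ T.PT) : (m.f (p ++ [a])).isSome := by
  obtain ⟨hv, -⟩ := m.exists_get_prefix_of_isSome_append hva
  obtain ⟨wv, hwv⟩ := Option.isSome_iff_exists.mp hv
  obtain ⟨wva, hwva⟩ := Option.isSome_iff_exists.mp hva
  obtain ⟨_, _, -, -, hfpa⟩ :=
    (m.cond4 v p a wv hwv (m.rel_symm hrel) (m.f_mem _ hva) hpa).2 wva hwva
  simp [hfpa]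

section Resulting

variable [Finite σ] (h0 : (m.f []).isSome)

theorem state_eq_state_iff {p q : List σ} (hp : (m.f p).isSome) (hq : (m.f q).isSome) :
    m.state h0 hp = m.state h0 hq ↔ m.rel p q :=
  Subtype.ext_iff.trans (m.rel_iff_cls_eq (m.f_mem q hq)).symm

/-- Condition (4) makes the transition independent of the representative that `resulting`
chooses. -/
theorem resulting_delta_state {p : List σ} {a : σ} (hp : (m.f p).isSome)
    (hpa : (m.f (p ++ [a])).isSome) :
    (m.resulting h0).δ (m.state h0 hp) a =
      some (m.state h0 hpa, ((m.f (p ++ [a])).get hpa).drop ((m.f p).get hp).length) := by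
  simp only [resulting, state]
  split
  case isFalse hn => exact absurd ⟨p, hp, hpa, rfl⟩ hn
  rename_i hex
  obtain ⟨hv, hva, hcls⟩ := hex.choose_spec
  obtain ⟨wp, hwp⟩ := Option.isSome_iff_exists.mp hp
  obtain ⟨wpa, hwpa⟩ := Option.isSome_iff_exists.mp hpa
  have hrel : m.rel p hex.choose := (m.rel_iff_cls_eq (m.f_mem _ hv)).mpr hcls
  obtain ⟨hrela, hf⟩ := m.cond4 p _ a wp hwp hrel (m.f_mem _ hpa) (m.f_mem _ hva)
  obtain ⟨wv, x, hwv, rfl, hwva⟩ := hf wpa hwpa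
  refine congrArg some (Prod.ext (Subtype.ext ?_) ?_)
  · exact ((m.rel_iff_cls_eq (m.f_mem _ hva)).mp hrela).symm
  · simp only [hwva, hwv, hwpa, hwp, Option.get_some, List.drop_left]

theorem resulting_delta_state_eq_none {p : List σ} {a : σ} (hp : (m.f p).isSome)
    (hn : ¬ ∃ v, m.rel p v ∧ (m.f (v ++ [a])).isSome) :
    (m.resulting h0).δ (m.state h0 hp) a = none := by
  refine dif_neg ?_
  rintro ⟨v, hv, hva, hcls⟩
  exact hn ⟨v, (m.rel_iff_cls_eq (m.f_mem v hv)).mpr hcls, hva⟩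

/-- Condition (5) makes the final output independent of the representative that `resulting`
chooses. -/
theorem resulting_deltaF_state {x : List σ} (hx : (m.f x).isSome) (hxr : x ∈ T.rows)
    {wx : List γ} (hval : T.val x = TVal.word wx) :
    (m.resulting h0).δF (m.state h0 hx) = some (wx.drop ((m.f x).get hx).length) := by
  simp only [resulting, state]
  split
  case isFalse hn => exact absurd ⟨x, hx, rfl, hxr, wx, hval⟩ hn
  rename_i hex
  obtain ⟨hv, hcls, hvr, hwv⟩ := hex.choose_spec
  have hrel : m.rel x hex.choose := (m.rel_iff_cls_eq (m.f_mem _ hv)).mpr hcls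
  obtain ⟨z, fx, fv, hfx, hfv, rfl, hwvz⟩ :=
    (m.cond5 x _ wx hxr hval hrel).2 _ hvr hwv.choose_spec
  simp only [hwvz, hfv, hfx, Option.get_some, List.drop_left]

theorem exists_rel_of_resulting_deltaF_isSome {p : List σ} (hp : (m.f p).isSome)
    (h : ((m.resulting h0).δF (m.state h0 hp)).isSome) :
    ∃ v wv, m.rel p v ∧ v ∈ T.rows ∧ T.val v = TVal.word wv := by
  simp only [resulting, state] at h
  split at h
  case isFalse => simp at h
  rename_i hex
  obtain ⟨hv, hcls, hvr, wv, hwv⟩ := hex.choose_spec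
  exact ⟨_, wv, (m.rel_iff_cls_eq (m.f_mem _ hv)).mpr hcls, hvr, hwv⟩

theorem runFrom_resulting_q0 {p : List σ} (hp : (m.f p).isSome) :
    ∃ w, (m.resulting h0).runFrom (m.resulting h0).q0 p = some (m.state h0 hp, w) ∧
      (m.f []).get h0 ++ w = (m.f p).get hp := by
  induction p using List.reverseRecOn with
  | nil => exact ⟨[], rfl, List.append_nil _⟩
  | append_singleton p a ih =>
    obtain ⟨hp', hpre⟩ := m.exists_get_prefix_of_isSome_append hp
    obtain ⟨w, hrun, hw⟩ := ih hp'
    refine ⟨w ++ ((m.f (p ++ [a])).get hp).drop ((m.f p).get hp').length, ?_, ?_⟩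
    · rw [Transducer.runFrom_concat, hrun, Option.bind_some, m.resulting_delta_state h0 hp' hp]
      rfl
    · rw [← List.append_assoc, hw]
      exact List.prefix_iff_eq_append.mp hpre

theorem isSome_f_of_runFrom_resulting_isSome {p : List σ} (hpT : p ∈ T.PT)
    (hrun : ((m.resulting h0).runFrom (m.resulting h0).q0 p).isSome) : (m.f p).isSome := by
  induction p using List.reverseRecOn with
  | nil => exact h0
  | append_singleton p a ih =>
    rw [Transducer.runFrom_concat] at hrun
    have hp : (m.f p).isSome :=
      ih (ObsTable.mem_PT_of_prefix_s7 (List.prefix_append _ _) hpT)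
        (Option.isSome_of_isSome_bind hrun)
    obtain ⟨w, hr, -⟩ := m.runFrom_resulting_q0 h0 hp
    rw [hr, Option.bind_some, Option.isSome_map] at hrun
    by_contra hpa
    refine absurd (m.resulting_delta_state_eq_none h0 hp ?_) (Option.isSome_iff_ne_none.mp hrun)
    rintro ⟨v, hrel, hva⟩
    exact hpa (m.isSome_append_of_rel hrel hva hpT)

theorem resulting_sem_of_val_word {x : List σ} {wx : List γ} (hxr : x ∈ T.rows)
    (hval : T.val x = TVal.word wx) : (m.resulting h0).sem x = some wx := by
  obtain ⟨fx, hfx, hfxw⟩ := m.cond2 x [] wx (ObsTable.mem_PT_of_mem_rows hxr)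
    (by simpa using hxr) (by simpa using hval)
  have hx : (m.f x).isSome := by simp [hfx]
  have hprefix : (m.f x).get hx <+: wx := by simpa only [hfx, Option.get_some] using hfxw
  obtain ⟨w, hrun, hw⟩ := m.runFrom_resulting_q0 h0 hx
  rw [Transducer.sem, hrun, Option.bind_some, m.resulting_deltaF_state h0 hx hxr hval,
    Option.map_some]
  exact congrArg some ((congrArg (· ++ _) hw).trans (List.prefix_iff_eq_append.mp hprefix))

theorem resulting_sem_of_val_bot {x : List σ} (hxr : x ∈ T.rows) (hval : T.val x = TVal.bot) :
    (m.resulting h0).sem x = none := by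
  by_contra hsem
  rw [← ne_eq, Option.ne_none_iff_isSome, Transducer.sem] at hsem
  have hx := m.isSome_f_of_runFrom_resulting_isSome h0 (ObsTable.mem_PT_of_mem_rows hxr)
    (Option.isSome_of_isSome_bind hsem)
  obtain ⟨w, hrun, -⟩ := m.runFrom_resulting_q0 h0 hx
  rw [hrun, Option.bind_some, Option.isSome_map] at hsem
  obtain ⟨v, wv, hrel, hvr, hwv⟩ := m.exists_rel_of_resulting_deltaF_isSome h0 hx hsem
  exact (m.cond5 v x wv hvr hwv (m.rel_symm hrel)).1 hxr hval

theorem compatible_resulting : T.Compatible (m.resulting h0) := fun _ hx =>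
  ⟨fun _ => m.resulting_sem_of_val_word h0 hx, m.resulting_sem_of_val_bot h0 hx⟩

theorem not_usesTransition_of_openEnd {u : List σ} {a : σ} (ho : m.OpenEnd u a)
    (hu : (m.f u).isSome) {x : List σ} (hx : x ∈ T.PT) :
    ¬ (m.resulting h0).usesTransition (m.state h0 hu) a x := by
  rintro ⟨vp, vs, w, rfl, hrun⟩
  have hvpa : vp ++ [a] ∈ T.PT := ObsTable.mem_PT_of_prefix_s7 ⟨vs, by simp⟩ hx
  have hvp := m.isSome_f_of_runFrom_resulting_isSome h0
    (ObsTable.mem_PT_of_prefix_s7 (List.prefix_append _ _) hvpa) (by simp [hrun])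
  obtain ⟨w', hrun', -⟩ := m.runFrom_resulting_q0 h0 hvp
  have hq : m.state h0 hvp = m.state h0 hu := by
    rw [hrun'] at hrun
    exact (Prod.ext_iff.mp (Option.some.inj hrun)).1
  exact ho.2 ⟨vp, m.rel_symm ((m.state_eq_state_iff h0 hvp hu).mp hq), hvpa⟩

end Resulting

end MergingMap

theorem openEnd_add_compatible_general {σ γ : Type} [Finite σ]
    (T : ObsTable σ γ) (m : MergingMap T) (h0 : (m.f []).isSome)
    (u : List σ) (a : σ) (ho : m.OpenEnd u a) (hu : (m.f u).isSome) :
    (m.resulting h0).δ (m.state h0 hu) a = none ∧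
    ∀ (u' : List σ) (hu' : (m.f u').isSome = true) (w : List γ),
      T.Compatible ((m.resulting h0).modifyDelta (m.state h0 hu) a
        (some (m.state h0 hu', w))) := by
  refine ⟨m.resulting_delta_state_eq_none h0 hu fun ⟨v, hrel, hva⟩ =>
    ho.2 ⟨v, hrel, m.f_mem _ hva⟩, fun _ _ _ x hx => ?_⟩
  rw [Transducer.sem_modifyDelta_of_not_usesTransition _
    (m.not_usesTransition_of_openEnd h0 ho hu (ObsTable.mem_PT_of_mem_rows hx))]
  exact m.compatible_resulting h0 x hx

/-- At an open end `(u, a)`, the resulting transducer has no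
transition out of `q_u` reading `a`, and adding any transition
`q_u →^{a|w} q_{u'}` (for `u' ∈ dom f`, `w ∈ Γ*`) yields a transducer
compatible with `T`. -/
theorem openEnd_add_compatible {σ γ : Type} [Finite σ] [Finite γ]
    (T : ObsTable σ γ) (m : MergingMap T) (h0 : (m.f []).isSome)
    (u : List σ) (a : σ) (ho : m.OpenEnd u a) (hu : (m.f u).isSome) :
    (m.resulting h0).δ (m.state h0 hu) a = none ∧
    ∀ (u' : List σ) (hu' : (m.f u').isSome = true) (w : List γ),
      T.Compatible ((m.resulting h0).modifyDelta (m.state h0 hu) a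
        (some (m.state h0 hu', w))) :=
  openEnd_add_compatible_general T m h0 u a ho hu
end
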